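/- arXiv:2002.07701 — 7 statements merged into one kernel-verified Lean document; each statement's English description precedes it below -/
import Mathlib

section
/- If (a, b) is a Golay complementary pair of length N with equal energies ρ_a(0) = ρ_b(0), then the PAPR of a, defined as sup_{|z|=1} |p_a(z)|² divided by the mean power ρ_a(0), is at most 2 (i.e., 3 dB). -/
noncomputable def pPoly (a : ℤ → ℂ) (N : ℕ) (z : ℂ) : ℂ :=
  ∑ n ∈ Finset.range N, a n * z ^ n

noncomputable def apac (a : ℤ → ℂ) (N : ℕ) (k : ℤ) : ℂ :=
  ∑ n ∈ Finset.range N, a (n + k) * (starRingEnd ℂ) (a n)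

/-- A Golay complementary pair with equal energies yields PAPR at most 2 (3 dB):
the peak power over the unit circle divided by the mean power `ρ_a(0)` is at most 2. -/
theorem stmt3 (N : ℕ) (a b : ℤ → ℂ)
    (hsa : ∀ n : ℤ, n < 0 ∨ (N : ℤ) ≤ n → a n = 0)
    (hsb : ∀ n : ℤ, n < 0 ∨ (N : ℤ) ≤ n → b n = 0)
    (hGCP : ∀ k : ℤ, k ≠ 0 → apac a N k + apac b N k = 0)
    (hEq : apac a N 0 = apac b N 0)
    (hpos : 0 < (apac a N 0).re) :
    ∀ z : ℂ, ‖z‖ = 1 →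
      ‖pPoly a N z‖ ^ 2 / (apac a N 0).re ≤ 2 := by
  intro z hz
  have hN : 0 < N := by
    by_contra h
    push_neg at h
    interval_cases N
    simp [apac] at hpos
  have hzz : z * (starRingEnd ℂ) z = 1 := by
    rw [Complex.mul_conj]
    norm_cast
    rw [Complex.normSq_eq_norm_sq, hz]; norm_num
  set w : ℤ → ℂ := fun k => if 0 ≤ k then z ^ k.toNat else ((starRingEnd ℂ) z) ^ (-k).toNat
    with hwdef
  have hw : ∀ n m : ℕ, w ((n : ℤ) - m) = z ^ n * ((starRingEnd ℂ) z) ^ m := by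
    intro n m
    rcases le_or_gt m n with h | h
    · have h0 : (0:ℤ) ≤ (n:ℤ) - m := by omega
      have ht : ((n:ℤ) - m).toNat = n - m := by omega
      simp only [hwdef, if_pos h0, ht]
      have : z ^ n = z ^ (n - m) * z ^ m := by
        rw [← pow_add]; congr 1; omega
      rw [this, mul_assoc, ← mul_pow, hzz, one_pow, mul_one]
    · have h0 : ¬ (0:ℤ) ≤ (n:ℤ) - m := by omega
      have ht : (-((n:ℤ) - m)).toNat = m - n := by omega
      simp only [hwdef, if_neg h0, ht]
      have : ((starRingEnd ℂ) z) ^ m = ((starRingEnd ℂ) z) ^ (m - n) * ((starRingEnd ℂ) z) ^ n := by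
        rw [← pow_add]; congr 1; omega
      rw [this, show z ^ n * ((starRingEnd ℂ) z ^ (m - n) * (starRingEnd ℂ) z ^ n)
          = (starRingEnd ℂ) z ^ (m - n) * (z * (starRingEnd ℂ) z) ^ n by ring,
        hzz, one_pow, mul_one]
  set g : ℤ × ℕ → ℂ := fun p =>
    (a (p.2 + p.1) * (starRingEnd ℂ) (a p.2) + b (p.2 + p.1) * (starRingEnd ℂ) (b p.2)) * w p.1
    with hgdef
  set e : ℕ × ℕ → ℤ × ℕ := fun p => ((p.1 : ℤ) - p.2, p.2) with hedef
  have key : pPoly a N z * (starRingEnd ℂ) (pPoly a N z)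
      + pPoly b N z * (starRingEnd ℂ) (pPoly b N z) = 2 * apac a N 0 := by
    have expand : pPoly a N z * (starRingEnd ℂ) (pPoly a N z)
        + pPoly b N z * (starRingEnd ℂ) (pPoly b N z)
        = ∑ p ∈ Finset.range N ×ˢ Finset.range N, g (e p) := by
      simp only [pPoly, map_sum, Finset.sum_mul_sum, map_mul, map_pow]
      rw [← Finset.sum_add_distrib, Finset.sum_product]
      refine Finset.sum_congr rfl fun n _ => ?_
      rw [← Finset.sum_add_distrib]
      refine Finset.sum_congr rfl fun m _ => ?_
      simp only [hgdef, hedef]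
      have : ((m : ℤ) + ((n:ℤ) - m)) = (n : ℤ) := by ring
      rw [this, hw]
      ring
    rw [expand]
    have hinj : ∀ p ∈ Finset.range N ×ˢ Finset.range N,
        ∀ q ∈ Finset.range N ×ˢ Finset.range N, e p = e q → p = q := by
      rintro ⟨p1, p2⟩ _ ⟨q1, q2⟩ _ h
      simp only [hedef, Prod.mk.injEq] at h
      obtain ⟨h1, h2⟩ := h
      simp only [Prod.mk.injEq]
      omega
    rw [← Finset.sum_image hinj]
    have hsub : (Finset.range N ×ˢ Finset.range N).image e ⊆
        Finset.Ioo (-(N:ℤ)) N ×ˢ Finset.range N := by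
      intro p hp
      simp only [Finset.mem_image, Finset.mem_product, Finset.mem_range, hedef] at hp
      obtain ⟨q, ⟨h1, h2⟩, rfl⟩ := hp
      simp only [Finset.mem_product, Finset.mem_Ioo, Finset.mem_range]
      omega
    rw [Finset.sum_subset hsub]
    · rw [Finset.sum_product]
      rw [Finset.sum_eq_single 0]
      · have hw0 : w 0 = 1 := by simp [hwdef]
        simp only [hgdef, hw0, mul_one, add_zero]
        rw [Finset.sum_add_distrib]
        have h2 : (2:ℂ) * apac a N 0 = apac a N 0 + apac b N 0 := by rw [← hEq]; ring
        rw [h2]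
        simp [apac]
      · intro k _ hk
        have : (∑ m ∈ Finset.range N, (a (m + k) * (starRingEnd ℂ) (a m)
            + b (m + k) * (starRingEnd ℂ) (b m))) = apac a N k + apac b N k := by
          rw [apac, apac, Finset.sum_add_distrib]
        calc ∑ m ∈ Finset.range N, g (k, m)
            = (∑ m ∈ Finset.range N, (a (m + k) * (starRingEnd ℂ) (a m)
              + b (m + k) * (starRingEnd ℂ) (b m))) * w k := by
              rw [Finset.sum_mul]
          _ = 0 := by rw [this, hGCP k hk, zero_mul]
      · intro h0
        exfalso
        apply h0
        simp only [Finset.mem_Ioo]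
        omega
    · intro p hp hnp
      simp only [Finset.mem_product, Finset.mem_Ioo, Finset.mem_range] at hp
      have hout : (p.2 : ℤ) + p.1 < 0 ∨ (N : ℤ) ≤ (p.2 : ℤ) + p.1 := by
        by_contra h
        push_neg at h
        apply hnp
        simp only [Finset.mem_image, Finset.mem_product, Finset.mem_range, hedef]
        refine ⟨(((p.2 : ℤ) + p.1).toNat, p.2), ⟨by omega, hp.2⟩, ?_⟩
        rw [Prod.mk.injEq]
        exact ⟨by omega, rfl⟩
      simp only [hgdef, hsa _ hout, hsb _ hout, zero_mul, add_zero, zero_mul]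
  have hre := congrArg Complex.re key
  rw [Complex.mul_conj, Complex.mul_conj] at hre
  simp only [Complex.add_re, Complex.ofReal_re, Complex.mul_re] at hre
  have hre2 : Complex.normSq (pPoly a N z) + Complex.normSq (pPoly b N z)
      = 2 * (apac a N 0).re := by
    simpa using hre
  have hb : ‖pPoly a N z‖ ^ 2 ≤ 2 * (apac a N 0).re := by
    rw [Complex.sq_norm]
    nlinarith [Complex.normSq_nonneg (pPoly b N z)]
  rw [div_le_iff₀ hpos]
  linarith
end

section
/- If (a, b) is a GCP of length N, then for any unimodular complex number w and any nonnegative integer d, the pair (p_a(z) + w z^{N+d} p_b(z), p_a(z) − w z^{N+d} p_b(z)) defines a GCP of length 2N + d (the iterative Golay construction with zero insertion/shift). -/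
/-- Iterative Golay construction with shift: if `(a,b)` is a GCP (polynomial
criterion), then `(p_a(z) + w z^{N+d} p_b(z), p_a(z) − w z^{N+d} p_b(z))`
satisfies the GCP polynomial criterion (for a GCP of length `2N + d`). -/
theorem stmt7 (N d : ℕ) (a b : ℤ → ℂ) (w : ℂ) (hw : ‖w‖ = 1)
    (hGCP : ∃ C : ℝ, ∀ z : ℂ, ‖z‖ = 1 →
      ‖pPoly a N z‖ ^ 2 + ‖pPoly b N z‖ ^ 2 = C) :
    ∃ C : ℝ, ∀ z : ℂ, ‖z‖ = 1 →
      ‖pPoly a N z + w * z ^ (N + d) * pPoly b N z‖ ^ 2 +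
        ‖pPoly a N z - w * z ^ (N + d) * pPoly b N z‖ ^ 2 = C := by
  obtain ⟨C, hC⟩ := hGCP
  refine ⟨2 * C, fun z hz => ?_⟩
  have hunimodular : ‖w * z ^ (N + d) * pPoly b N z‖ = ‖pPoly b N z‖ := by
    simp only [norm_mul, norm_pow, hw, hz, one_pow, one_mul]
  rw [parallelogram_law_with_norm ℂ, hunimodular, hC z hz]
end

section
/- Golay-Davis-Jedwab sequences are complementary: for m ≥ 1, H = 2^q, a permutation π of {1,...,m}, coefficients k_0, k_1, ..., k_m ∈ ℤ_H, the length-2^m sequence c with c_x = ω^{f(x)} where ω = e^{2πi/H}, f(x) = (H/2) Σ_{n=1}^{m-1} x_{π(n)} x_{π(n+1)} + Σ_{n=1}^m k_n x_{π(n)} + k_0, and (x_1,...,x_m) the binary digits of x (most significant first), satisfies sup_{|z|=1} |p_c(z)|² ≤ 2^{m+1}; equivalently its PAPR is at most 2. -/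
def bitZ {M : ℕ} (x : Fin M → Bool) (j : Fin M) : ℤ := if x j then 1 else 0

/-!
Reindexing by `σ` turns the sequence into the path form `h · Σ yᵢ yᵢ₊₁ + Σ kₙ yₙ` in the
variables `y = x ∘ σ`, where `h = H/2` and `ζ = e^{2πi/H}` satisfy `ζ^h = -1`. Splitting off
`y₀` writes its polynomial as `A + w B`, and that of the companion (with `k₀` shifted by `h`) as
`A - w B`, where `|w| = 1` and `A`, `B` are the polynomials of a complementary pair on one
variable fewer. The parallelogram law then doubles `‖·‖² + ‖·‖²` at every variable, giving
`2^{m+2}` for the pair, which bounds each member.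
-/

lemma Fintype.sum_fin_succ_pi_bool {α : Type*} [AddCommMonoid α] {n : ℕ}
    (f : (Fin (n + 1) → Bool) → α) :
    ∑ y, f y = ∑ t, f (Fin.cons false t) + ∑ t, f (Fin.cons true t) := by
  rw [← (Fin.consEquiv fun _ => Bool).sum_comp, Fintype.sum_prod_type, Fintype.sum_bool,
    add_comm]
  rfl

lemma norm_add_mul_sq_add_norm_sub_mul_sq (a b w : ℂ) (hw : ‖w‖ = 1) :
    ‖a + w * b‖ ^ 2 + ‖a - w * b‖ ^ 2 = 2 * (‖a‖ ^ 2 + ‖b‖ ^ 2) := by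
  have h := parallelogram_law_with_norm ℂ a (w * b)
  rw [norm_mul, hw, one_mul] at h
  linear_combination h

namespace GolayPath

def bitWeight {ι : Type*} [Fintype ι] (e : ι → ℕ) (y : ι → Bool) : ℕ :=
  ∑ n, (if y n then 1 else 0) * e n

lemma bitWeight_comp {ι : Type*} [Fintype ι] (σ : Equiv.Perm ι) (e : ι → ℕ) (y : ι → Bool) :
    bitWeight (e ∘ σ) (y ∘ σ) = bitWeight e y :=
  Equiv.sum_comp σ fun n => (if y n then 1 else 0) * e n

lemma bitWeight_cons {M : ℕ} (e : Fin (M + 1) → ℕ) (b : Bool) (t : Fin M → Bool) :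
    bitWeight e (Fin.cons b t) = (if b then e 0 else 0) + bitWeight (e ∘ Fin.succ) t := by
  simp [bitWeight, Fin.sum_univ_succ]

def pathForm {M : ℕ} (h : ℤ) (k : Fin (M + 1) → ℤ) (y : Fin (M + 1) → Bool) : ℤ :=
  h * ∑ i : Fin M, bitZ y i.castSucc * bitZ y i.succ + ∑ n, k n * bitZ y n

lemma pathForm_cons_false {M : ℕ} (h : ℤ) (k : Fin (M + 2) → ℤ) (t : Fin (M + 1) → Bool) :
    pathForm h k (Fin.cons false t) = pathForm h (k ∘ Fin.succ) t := by
  simp [pathForm, bitZ, Fin.sum_univ_succ]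

/-- The edge `y₀ y₁` moves into the vertex weight of `y₁`. -/
lemma pathForm_cons_true {M : ℕ} (h : ℤ) (k : Fin (M + 2) → ℤ) (t : Fin (M + 1) → Bool) :
    pathForm h k (Fin.cons true t) = k 0 + pathForm h (k ∘ Fin.succ + Pi.single 0 h) t := by
  simp only [pathForm, bitZ, Fin.sum_univ_succ, ← Fin.succ_castSucc, Fin.castSucc_zero,
    Fin.cons_zero, Fin.cons_succ, Pi.add_apply, Function.comp_apply, Pi.single_eq_same,
    ne_eq, Fin.succ_ne_zero, not_false_eq_true, Pi.single_eq_of_ne, add_zero]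
  split_ifs <;> ring

variable (ζ : ℂ) (h : ℤ)

noncomputable def pathPoly {M : ℕ} (k : Fin (M + 1) → ℤ) (e : Fin (M + 1) → ℕ) (z : ℂ) : ℂ :=
  ∑ y, ζ ^ pathForm h k y * z ^ bitWeight e y

variable {ζ h}

lemma pathPoly_zero (k : Fin 1 → ℤ) (e : Fin 1 → ℕ) (z : ℂ) :
    pathPoly ζ h k e z = 1 + ζ ^ k 0 * z ^ e 0 := by
  simp [pathPoly, Fintype.sum_fin_succ_pi_bool, pathForm, bitWeight, bitZ]

lemma pathPoly_succ (hζ : ζ ≠ 0) {M : ℕ} (k : Fin (M + 2) → ℤ) (e : Fin (M + 2) → ℕ) (z : ℂ) :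
    pathPoly ζ h k e z = pathPoly ζ h (k ∘ Fin.succ) (e ∘ Fin.succ) z +
      ζ ^ k 0 * z ^ e 0 * pathPoly ζ h (k ∘ Fin.succ + Pi.single 0 h) (e ∘ Fin.succ) z := by
  rw [pathPoly, Fintype.sum_fin_succ_pi_bool, pathPoly, pathPoly, Finset.mul_sum]
  congr 1 <;> refine Finset.sum_congr rfl fun t _ => ?_
  · simp [pathForm_cons_false, bitWeight_cons]
  · rw [pathForm_cons_true, bitWeight_cons, zpow_add₀ hζ, pow_add]
    simp only [if_true]
    ring

/-- `(k, k + h δ₀)` is a Golay complementary pair on the unit circle. -/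
theorem norm_pathPoly_sq_add (hζ : ‖ζ‖ = 1) (hζh : ζ ^ h = -1) {z : ℂ} (hz : ‖z‖ = 1) :
    ∀ {M : ℕ} (k : Fin (M + 1) → ℤ) (e : Fin (M + 1) → ℕ),
      ‖pathPoly ζ h k e z‖ ^ 2 + ‖pathPoly ζ h (k + Pi.single 0 h) e z‖ ^ 2 = 2 ^ (M + 2) := by
  have hζ0 : ζ ≠ 0 := norm_ne_zero_iff.mp (by rw [hζ]; exact one_ne_zero)
  have hw : ∀ (a : ℤ) (n : ℕ), ‖ζ ^ a * z ^ n‖ = 1 := fun a n => by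
    rw [norm_mul, norm_zpow, norm_pow, hζ, hz, one_zpow, one_pow, one_mul]
  have hshift : ∀ a : ℤ, ζ ^ (a + h) = -ζ ^ a := fun a => by rw [zpow_add₀ hζ0, hζh, mul_neg_one]
  intro M
  induction M with
  | zero =>
    intro k e
    simp only [pathPoly_zero, Pi.add_apply, Pi.single_eq_same, hshift, neg_mul,
      ← sub_eq_add_neg]
    rw [← mul_one (ζ ^ k 0 * z ^ e 0), norm_add_mul_sq_add_norm_sub_mul_sq 1 1 _ (hw _ _)]
    norm_num
  | succ M ih =>
    intro k e
    have htail : (k + Pi.single 0 h) ∘ Fin.succ = k ∘ Fin.succ := by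
      funext n; simp [Fin.succ_ne_zero]
    rw [pathPoly_succ hζ0, pathPoly_succ hζ0, htail]
    simp only [Pi.add_apply, Pi.single_eq_same, hshift, neg_mul, ← sub_eq_add_neg]
    rw [norm_add_mul_sq_add_norm_sub_mul_sq _ _ _ (hw _ _), ih, pow_succ _ (M + 2)]
    ring

lemma sum_pathForm_comp_perm {M : ℕ} (σ : Equiv.Perm (Fin (M + 1))) (k : Fin (M + 1) → ℤ)
    (e : Fin (M + 1) → ℕ) (z : ℂ) :
    ∑ x, ζ ^ pathForm h k (x ∘ σ) * z ^ bitWeight e x = pathPoly ζ h k (e ∘ σ) z := by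
  refine Fintype.sum_equiv (Equiv.arrowCongr σ.symm (Equiv.refl Bool)) _ _ fun x => ?_
  rw [← bitWeight_comp σ e x]
  rfl

end GolayPath

open GolayPath in
/-- Golay–Davis–Jedwab sequences are complementary: with `m + 1 ≥ 1` binary
variables, `H = 2^q`, a permutation `σ`, and coefficients `k₀, kₙ ∈ ℤ_H`, the
sequence `c_x = ω^{f(x)}` (with `ω = e^{2πi/H}` and `f` the quadratic GDJ form)
has peak power at most `2^{(m+1)+1}` on the unit circle, i.e. PAPR ≤ 2. -/
theorem stmt8 (m q : ℕ) (hq : 1 ≤ q) (σ : Equiv.Perm (Fin (m + 1)))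
    (k : Fin (m + 1) → ℤ) (k0 : ℤ) :
    ∀ z : ℂ, ‖z‖ = 1 →
      ‖(∑ x : Fin (m + 1) → Bool,
          Complex.exp (2 * Real.pi * Complex.I *
              (((2 ^ (q - 1) : ℤ) *
                    (∑ i : Fin m, bitZ x (σ i.castSucc) * bitZ x (σ i.succ)) +
                  (∑ n : Fin (m + 1), k n * bitZ x (σ n)) + k0 : ℤ) : ℂ) /
              ((2 : ℂ) ^ q)) *
            z ^ (∑ j : Fin (m + 1), (if x j then 1 else 0) * 2 ^ (m - j.val)))‖ ^ 2
        ≤ 2 ^ (m + 2) := by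
  intro z hz
  set ζ := Complex.exp (2 * Real.pi * Complex.I / 2 ^ q)
  have hexp : ∀ a : ℤ, Complex.exp (2 * Real.pi * Complex.I * ((a + k0 : ℤ) : ℂ) / 2 ^ q)
      = ζ ^ k0 * ζ ^ a := fun a => by
    rw [← zpow_add₀ (Complex.exp_ne_zero _), ← Complex.exp_int_mul]
    push_cast
    ring_nf
  have hζ : ‖ζ‖ = 1 := by
    simpa using (Complex.isPrimitiveRoot_exp (2 ^ q) (by positivity)).norm'_eq_one (by positivity)
  have hζh : ζ ^ (2 ^ (q - 1) : ℤ) = -1 := by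
    rw [← Complex.exp_int_mul, ← Complex.exp_pi_mul_I]
    congr 1
    rw [show q = q - 1 + 1 by omega, pow_succ]
    push_cast
    field_simp
  simp only [hexp]
  change ‖∑ x, ζ ^ k0 * ζ ^ pathForm (2 ^ (q - 1)) k (x ∘ σ) *
    z ^ bitWeight (fun j : Fin (m + 1) => 2 ^ (m - j.val)) x‖ ^ 2 ≤ _
  simp_rw [mul_assoc, ← Finset.mul_sum, sum_pathForm_comp_perm, norm_mul, norm_zpow, hζ,
    one_zpow, one_mul]
  calc _ ≤ _ := le_add_of_nonneg_right (sq_nonneg _)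
    _ = _ := norm_pathPoly_sq_add hζ hζh hz k _
end

section
/- In the Golay layer construction with initial GCP a = b = (1), the sequence c of length 2^m defined by c_x = p_o(x) · exp(f_r(x) + i f_i(x)), where f_r(x) = α(e_m x_{π(m)} + Σ_{n=1}^{m-1} e_n ((x_{π(n)} + x_{π(n+1)}) mod 2) + e_0), f_i(x) = π Σ_{n=1}^{m-1} x_{π(n)} x_{π(n+1)} + β(Σ_{n=1}^m k_n x_{π(n)} + k_0), is a complementary sequence: sup over the unit circle of |p_c(z)|² ≤ 2 Σ_x |c_x|². -/
/-- The bit `x_j` of a binary tuple, as a real number. -/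
def bitR {M : ℕ} (x : Fin M → Bool) (j : Fin M) : ℝ := if x j then 1 else 0

/-- Amplitude function `f_r` of the Golay layer. -/
noncomputable def fR (m : ℕ) (σ : Equiv.Perm (Fin (m + 1))) (α e0 : ℝ)
    (e : Fin (m + 1) → ℝ) (x : Fin (m + 1) → Bool) : ℝ :=
  α * (e (Fin.last m) * bitR x (σ (Fin.last m)) +
    (∑ i : Fin m, e i.castSucc *
      (((bitZ x (σ i.castSucc) + bitZ x (σ i.succ)) % 2 : ℤ) : ℝ)) + e0)

/-- Phase function `f_i` of the Golay layer. -/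
noncomputable def fI (m : ℕ) (σ : Equiv.Perm (Fin (m + 1))) (β k0 : ℝ)
    (k : Fin (m + 1) → ℝ) (x : Fin (m + 1) → Bool) : ℝ :=
  Real.pi * (∑ i : Fin m, bitR x (σ i.castSucc) * bitR x (σ i.succ)) +
    β * ((∑ n : Fin (m + 1), k n * bitR x (σ n)) + k0)

/-- The Golay-layer sequence element `c_x = exp(f_r(x) + i f_i(x))`
(with initial GCP `a = b = (1)`, so `p_o(x) = 1`). -/
noncomputable def golayC (m : ℕ) (σ : Equiv.Perm (Fin (m + 1))) (α β e0 k0 : ℝ)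
    (e k : Fin (m + 1) → ℝ) (x : Fin (m + 1) → Bool) : ℂ :=
  Complex.exp ((fR m σ α e0 e x : ℝ) + Complex.I * (fI m σ β k0 k x : ℝ))

/-!
After relabelling the bits by `σ`, each term `c_x z^x` is a constant times the product
`∏ₙ w(yₙ, yₙ₊₁) · ∏ₙ vₙ^{yₙ}` of a path-shaped weight, where `w` is the kernel
`[[1, r], [r, -1]]` (with `r = exp (α eₙ)`, the sign coming from `exp (iπ yₙ yₙ₊₁)`) and `vₙ`
collects `z^{2^{m-σ n}}`, the phase `exp (iβ kₙ)` and, for the last bit only, the amplitude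
`exp (α eₘ)`; so `v₀, …, vₘ₋₁` are unimodular. Splitting the sum by the first bit into
`S₀ + S₁`, the rows of the kernel are orthogonal of equal norm `√(1 + r²)`, so
`|S₀|² + |S₁|²` is multiplied by `1 + r²` when a bit is prepended, exactly as the energy is;
by induction `|S₀|² + |S₁|²` equals the energy, and `|S₀ + S₁|² ≤ 2 (|S₀|² + |S₁|²)`.
-/

open Finset Complex

lemma sum_pi_fin_succ {M : Type*} [AddCommMonoid M] {n : ℕ} {β : Type*} [Fintype β]
    (F : (Fin (n + 1) → β) → M) :
    ∑ y, F y = ∑ b, ∑ y, F (Fin.cons b y) := by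
  rw [← Fintype.sum_prod_type']
  exact (Fintype.sum_equiv (Fin.consEquiv fun _ => β) _ _ fun _ => rfl).symm

def edgeWeight (r : ℝ) : Bool → Bool → ℂ
  | false, false => 1
  | true, true => -1
  | _, _ => r

lemma norm_edgeWeight_false_sq_add (r : ℝ) (c : Bool) :
    ‖edgeWeight r false c‖ ^ 2 + ‖edgeWeight r true c‖ ^ 2 = 1 + r ^ 2 := by
  cases c <;> simp [edgeWeight, add_comm]

lemma norm_add_mul_sq_add_norm_mul_sub_sq (A B : ℂ) (r : ℝ) :
    ‖A + r * B‖ ^ 2 + ‖r * A - B‖ ^ 2 = (1 + r ^ 2) * (‖A‖ ^ 2 + ‖B‖ ^ 2) := by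
  simp only [Complex.sq_norm, normSq_apply, add_re, add_im, sub_re, sub_im, mul_re, mul_im,
    ofReal_re, ofReal_im]
  ring

noncomputable def golayWeight {m : ℕ} (r : Fin m → ℝ) (v : Fin (m + 1) → ℂ)
    (y : Fin (m + 1) → Bool) : ℂ :=
  (∏ n : Fin m, edgeWeight (r n) (y n.castSucc) (y n.succ)) * ∏ n, if y n then v n else 1

lemma golayWeight_cons {m : ℕ} (r : Fin (m + 1) → ℝ) (v : Fin (m + 2) → ℂ) (b : Bool)
    (y : Fin (m + 1) → Bool) :
    golayWeight r v (Fin.cons b y) =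
      (if b then v 0 else 1) * edgeWeight (r 0) b (y 0) *
        golayWeight (Fin.tail r) (Fin.tail v) y := by
  simp only [golayWeight, Fin.prod_univ_succ (n := m + 1), Fin.prod_univ_succ (n := m),
    Fin.cons_zero, Fin.cons_succ, ← Fin.succ_castSucc, Fin.castSucc_zero, Fin.tail]
  ring

noncomputable def golaySum {m : ℕ} (r : Fin m → ℝ) (v : Fin (m + 1) → ℂ) (b : Bool) : ℂ :=
  ∑ y, golayWeight r v (Fin.cons b y)

lemma sum_golayWeight {m : ℕ} (r : Fin m → ℝ) (v : Fin (m + 1) → ℂ) :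
    ∑ y, golayWeight r v y = golaySum r v false + golaySum r v true := by
  rw [sum_pi_fin_succ, Fintype.sum_bool, add_comm]
  rfl

lemma golaySum_succ {m : ℕ} (r : Fin (m + 1) → ℝ) (v : Fin (m + 2) → ℂ) (b : Bool) :
    golaySum r v b = (if b then v 0 else 1) *
      (edgeWeight (r 0) b false * golaySum (Fin.tail r) (Fin.tail v) false +
        edgeWeight (r 0) b true * golaySum (Fin.tail r) (Fin.tail v) true) := by
  rw [golaySum]
  simp only [golayWeight_cons]
  rw [sum_pi_fin_succ, Fintype.sum_bool]
  simp only [golaySum, Fin.cons_zero, mul_add, mul_sum, mul_assoc]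
  exact add_comm _ _

lemma sum_norm_golayWeight_sq_succ {m : ℕ} (r : Fin (m + 1) → ℝ) (v : Fin (m + 2) → ℂ)
    (hv : ‖v 0‖ = 1) :
    ∑ y, ‖golayWeight r v y‖ ^ 2 =
      (1 + r 0 ^ 2) * ∑ y, ‖golayWeight (Fin.tail r) (Fin.tail v) y‖ ^ 2 := by
  rw [sum_pi_fin_succ, Fintype.sum_bool, ← sum_add_distrib, mul_sum]
  refine sum_congr rfl fun y _ => ?_
  simp only [golayWeight_cons, norm_mul, mul_pow, Bool.false_eq_true, ite_true, ite_false, hv,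
    norm_one]
  rw [← norm_edgeWeight_false_sq_add (r 0) (y 0)]
  ring

theorem norm_golaySum_sq_add {m : ℕ} (r : Fin m → ℝ) (v : Fin (m + 1) → ℂ)
    (hv : ∀ n : Fin m, ‖v n.castSucc‖ = 1) :
    ‖golaySum r v false‖ ^ 2 + ‖golaySum r v true‖ ^ 2 = ∑ y, ‖golayWeight r v y‖ ^ 2 := by
  induction m with
  | zero =>
    rw [sum_pi_fin_succ]
    simp [golaySum, golayWeight, add_comm]
  | succ m ih =>
    have hv0 : ‖v 0‖ = 1 := hv 0
    have ih' := ih (Fin.tail r) (Fin.tail v) fun n => by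
      rw [Fin.tail, Fin.succ_castSucc]
      exact hv n.succ
    rw [sum_norm_golayWeight_sq_succ r v hv0, ← ih', golaySum_succ, golaySum_succ]
    simp only [edgeWeight, Bool.false_eq_true, ite_true, ite_false, one_mul, norm_mul, hv0]
    rw [← norm_add_mul_sq_add_norm_mul_sub_sq, neg_one_mul, ← sub_eq_add_neg]

lemma edgeWeight_exp {M : ℕ} (x : Fin M → Bool) (i j : Fin M) (a : ℝ) :
    edgeWeight (Real.exp a) (x i) (x j) =
      cexp (↑(a * ((bitZ x i + bitZ x j) % 2 : ℤ)) +
        I * ↑(Real.pi * (bitR x i * bitR x j))) := by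
  unfold bitZ bitR
  cases x i <;> cases x j <;> simp [edgeWeight, ofReal_exp, mul_comm I (Real.pi : ℂ)]

lemma pow_sum_ite_mul_eq_prod {M ι : Type*} [CommMonoid M] [Fintype ι] (σ : Equiv.Perm ι)
    (z : M) (c : ι → ℕ) (x : ι → Bool) :
    z ^ (∑ j, (if x j then 1 else 0) * c j) = ∏ n, if x (σ n) then z ^ c (σ n) else 1 := by
  rw [← prod_pow_eq_pow_sum, ← Equiv.prod_comp σ]
  refine prod_congr rfl fun n _ => ?_
  cases x (σ n) <;> simp

lemma sum_comp_perm {ι β M : Type*} [Fintype ι] [DecidableEq ι] [Fintype β] [AddCommMonoid M]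
    (σ : Equiv.Perm ι) (F : (ι → β) → M) : ∑ x : ι → β, F (fun n => x (σ n)) = ∑ y, F y :=
  Fintype.sum_equiv (σ.symm.arrowCongr (Equiv.refl β)) _ _ fun _ => rfl

lemma norm_add_sq_le_two_mul {E : Type*} [SeminormedAddCommGroup E] (a b : E) :
    ‖a + b‖ ^ 2 ≤ 2 * (‖a‖ ^ 2 + ‖b‖ ^ 2) :=
  (pow_le_pow_left₀ (norm_nonneg _) (norm_add_le a b) 2).trans add_sq_le

section GolayLayer

variable (m : ℕ) (σ : Equiv.Perm (Fin (m + 1))) (α β e0 k0 : ℝ) (e k : Fin (m + 1) → ℝ)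

lemma golayC_eq_mul_prod (x : Fin (m + 1) → Bool) :
    golayC m σ α β e0 k0 e k x =
      cexp (↑(α * e0) + I * ↑(β * k0)) *
        (∏ i : Fin m, edgeWeight (Real.exp (α * e i.castSucc)) (x (σ i.castSucc)) (x (σ i.succ))) *
        ∏ n, if x (σ n) then cexp (↑(if n = Fin.last m then α * e n else 0) + I * ↑(β * k n))
          else 1 := by
  have hbit : ∀ n (w : ℂ), (if x (σ n) then cexp w else 1) = cexp (w * bitR x (σ n)) := by
    intro n w
    cases h : x (σ n) <;> simp [bitR, h]
  simp only [edgeWeight_exp, hbit, ← Complex.exp_sum, ← Complex.exp_add]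
  rw [golayC]
  congr 1
  simp only [fR, fI]
  push_cast
  simp only [add_mul, mul_add, apply_ite ((↑) : ℝ → ℂ), ofReal_zero, ofReal_mul, ite_mul,
    zero_mul, sum_add_distrib, mul_sum, sum_ite_eq', mem_univ, if_true]
  ring_nf

noncomputable def golayPhase (z : ℂ) (n : Fin (m + 1)) : ℂ :=
  z ^ 2 ^ (m - (σ n : ℕ)) * cexp (↑(if n = Fin.last m then α * e n else 0) + I * ↑(β * k n))

lemma norm_golayPhase_castSucc {z : ℂ} (hz : ‖z‖ = 1) (n : Fin m) :
    ‖golayPhase m σ α β e k z n.castSucc‖ = 1 := by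
  simp [golayPhase, (Fin.castSucc_lt_last n).ne, norm_exp, hz]

lemma golayC_mul_pow_eq (z : ℂ) (x : Fin (m + 1) → Bool) :
    golayC m σ α β e0 k0 e k x *
        z ^ (∑ j : Fin (m + 1), (if x j then 1 else 0) * 2 ^ (m - j.val)) =
      cexp (↑(α * e0) + I * ↑(β * k0)) *
        golayWeight (fun i => Real.exp (α * e i.castSucc)) (golayPhase m σ α β e k z)
          (fun n => x (σ n)) := by
  rw [golayC_eq_mul_prod, pow_sum_ite_mul_eq_prod σ, golayWeight, mul_assoc, mul_assoc,
    ← prod_mul_distrib]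
  congr 3 with n
  rw [golayPhase]
  split_ifs <;> ring

end GolayLayer

theorem stmt9_general (m : ℕ) (σ : Equiv.Perm (Fin (m + 1))) (α β : ℝ)
    (e0 k0 : ℝ) (e k : Fin (m + 1) → ℝ) :
    ∀ z : ℂ, ‖z‖ = 1 →
      ‖(∑ x : Fin (m + 1) → Bool,
          golayC m σ α β e0 k0 e k x *
            z ^ (∑ j : Fin (m + 1), (if x j then 1 else 0) * 2 ^ (m - j.val)))‖ ^ 2
        ≤ 2 * ∑ x : Fin (m + 1) → Bool,
            ‖golayC m σ α β e0 k0 e k x‖ ^ 2 := by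
  intro z hz
  set C := cexp (↑(α * e0) + I * ↑(β * k0))
  set r : Fin m → ℝ := fun i => Real.exp (α * e i.castSucc)
  set v := golayPhase m σ α β e k z
  have hW := norm_golaySum_sq_add r v (norm_golayPhase_castSucc m σ α β e k hz)
  have hterm := golayC_mul_pow_eq m σ α β e0 k0 e k z
  have hsum : ∑ x : Fin (m + 1) → Bool, golayC m σ α β e0 k0 e k x *
      z ^ (∑ j : Fin (m + 1), (if x j then 1 else 0) * 2 ^ (m - j.val)) =
      C * (golaySum r v false + golaySum r v true) := by
    rw [sum_congr rfl fun x _ => hterm x, ← mul_sum, sum_comp_perm σ (golayWeight r v),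
      sum_golayWeight]
  have henergy :
      ∑ x, ‖golayC m σ α β e0 k0 e k x‖ ^ 2 = ‖C‖ ^ 2 * ∑ y, ‖golayWeight r v y‖ ^ 2 := by
    have hnorm : ∀ x, ‖golayC m σ α β e0 k0 e k x‖ = ‖C * golayWeight r v (fun n => x (σ n))‖ :=
      fun x => by rw [← hterm, norm_mul, norm_pow, hz, one_pow, mul_one]
    simp_rw [hnorm, norm_mul, mul_pow, ← mul_sum]
    rw [sum_comp_perm σ fun y => ‖golayWeight r v y‖ ^ 2]
  rw [hsum, henergy, ← hW, norm_mul, mul_pow, mul_left_comm]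
  exact mul_le_mul_of_nonneg_left (norm_add_sq_le_two_mul _ _) (sq_nonneg _)

/-- The Golay layer produces a complementary sequence: its peak power on the
unit circle is at most twice its energy (PAPR ≤ 2, i.e. 3 dB). -/
theorem stmt9 (m : ℕ) (σ : Equiv.Perm (Fin (m + 1))) (α β : ℝ)
    (hα : 0 ≤ α) (hβ : 0 ≤ β) (e0 k0 : ℝ) (e k : Fin (m + 1) → ℝ) :
    ∀ z : ℂ, ‖z‖ = 1 →
      ‖(∑ x : Fin (m + 1) → Bool,
          golayC m σ α β e0 k0 e k x *
            z ^ (∑ j : Fin (m + 1), (if x j then 1 else 0) * 2 ^ (m - j.val)))‖ ^ 2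
        ≤ 2 * ∑ x : Fin (m + 1) → Bool,
            ‖golayC m σ α β e0 k0 e k x‖ ^ 2 :=
  stmt9_general m σ α β e0 k0 e k
end

section
/- Power normalization of the Golay layer: with a = b = (1) and f_r as in the construction, the energy of c (where |c_x| = e^{f_r(x)}) is Σ_{x=0}^{2^m−1} e^{2 f_r(x)} = e^{2α e_0} Π_{n=1}^m (1 + e^{2α e_n}). Consequently, choosing e_0 such that α e_0 = −(1/2) Σ_{n=1}^m ln((1 + e^{2α e_n})/2) makes the energy equal to 2^m. -/
def gMap {m : ℕ} (σ : Equiv.Perm (Fin (m + 1))) (x : Fin (m + 1) → Bool) :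
    Fin (m + 1) → Bool :=
  fun j => Fin.lastCases (x (σ (Fin.last m)))
    (fun i => xor (x (σ i.castSucc)) (x (σ i.succ))) j

lemma gMap_injective {m : ℕ} (σ : Equiv.Perm (Fin (m + 1))) :
    Function.Injective (gMap σ) := by
  intro x x' h
  have key : ∀ j : Fin (m + 1), x (σ j) = x' (σ j) := by
    intro j
    induction j using Fin.reverseInduction with
    | last =>
      have := congrFun h (Fin.last m)
      simpa [gMap] using this
    | cast i ih =>
      have h2 := congrFun h i.castSucc
      simp only [gMap, Fin.lastCases_castSucc] at h2
      rw [ih] at h2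
      revert h2
      cases x' (σ i.succ) <;> cases x (σ i.castSucc) <;>
        cases x' (σ i.castSucc) <;> simp
  funext j
  simpa using key (σ.symm j)

lemma mod_bit (a b : Bool) :
    ((((if a then 1 else 0) + (if b then 1 else 0)) % 2 : ℤ) : ℝ) =
      if xor a b then 1 else 0 := by
  cases a <;> cases b <;> norm_num

lemma exp_fR_eq (m : ℕ) (σ : Equiv.Perm (Fin (m + 1))) (α e0 : ℝ)
    (e : Fin (m + 1) → ℝ) (x : Fin (m + 1) → Bool) :
    Real.exp (2 * fR m σ α e0 e x) =
      Real.exp (2 * α * e0) *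
        ∏ n : Fin (m + 1),
          (if gMap σ x n then Real.exp (2 * α * e n) else 1) := by
  have hprod : ∀ n : Fin (m + 1),
      (if gMap σ x n then Real.exp (2 * α * e n) else 1) =
        Real.exp (2 * α * e n * (if gMap σ x n then 1 else 0)) := by
    intro n; cases hg : gMap σ x n <;> simp
  simp only [hprod]
  rw [← Real.exp_sum, ← Real.exp_add]
  congr 1
  rw [fR]
  rw [Fin.sum_univ_castSucc
    (f := fun n : Fin (m+1) => 2 * α * e n * (if gMap σ x n then 1 else 0))]
  have hlast : (if gMap σ x (Fin.last m) then (1:ℝ) else 0) = bitR x (σ (Fin.last m)) := by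
    simp [gMap, bitR]
  have hcast : ∀ i : Fin m,
      2 * α * e i.castSucc * (if gMap σ x i.castSucc then (1:ℝ) else 0) =
        2 * α * (e i.castSucc *
          (((bitZ x (σ i.castSucc) + bitZ x (σ i.succ)) % 2 : ℤ) : ℝ)) := by
    intro i
    simp only [gMap, Fin.lastCases_castSucc, bitZ, mod_bit]
    ring
  rw [hlast]
  simp only [hcast]
  rw [← Finset.mul_sum]
  ring

/-- Power normalization of the Golay layer: the energy
`Σ_x e^{2 f_r(x)}` factorizes as `e^{2αe₀} Π_n (1 + e^{2αe_n})`; consequently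
choosing `e₀` with `α e₀ = −(1/2) Σ_n ln((1 + e^{2αe_n})/2)` makes the energy
equal to `2^{m+1}`. -/
theorem stmt10 (m : ℕ) (σ : Equiv.Perm (Fin (m + 1))) (α : ℝ) (hα : 0 ≤ α)
    (e0 : ℝ) (e : Fin (m + 1) → ℝ) :
    ((∑ x : Fin (m + 1) → Bool, Real.exp (2 * fR m σ α e0 e x)) =
      Real.exp (2 * α * e0) * ∏ n : Fin (m + 1), (1 + Real.exp (2 * α * e n))) ∧
    (α * e0 = -(1 / 2) *
        ∑ n : Fin (m + 1), Real.log ((1 + Real.exp (2 * α * e n)) / 2) →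
      (∑ x : Fin (m + 1) → Bool, Real.exp (2 * fR m σ α e0 e x)) = 2 ^ (m + 1)) := by
  have hbij : Function.Bijective (gMap σ) :=
    (Finite.injective_iff_bijective).mp (gMap_injective σ)
  have hmain : (∑ x : Fin (m + 1) → Bool, Real.exp (2 * fR m σ α e0 e x)) =
      Real.exp (2 * α * e0) * ∏ n : Fin (m + 1), (1 + Real.exp (2 * α * e n)) := by
    calc (∑ x : Fin (m + 1) → Bool, Real.exp (2 * fR m σ α e0 e x))
        = ∑ x : Fin (m + 1) → Bool, Real.exp (2 * α * e0) *
            ∏ n : Fin (m + 1), (if gMap σ x n then Real.exp (2 * α * e n) else 1) := by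
          simp only [exp_fR_eq]
      _ = Real.exp (2 * α * e0) * ∑ x : Fin (m + 1) → Bool,
            ∏ n : Fin (m + 1), (if gMap σ x n then Real.exp (2 * α * e n) else 1) := by
          rw [Finset.mul_sum]
      _ = Real.exp (2 * α * e0) * ∑ y : Fin (m + 1) → Bool,
            ∏ n : Fin (m + 1), (if y n then Real.exp (2 * α * e n) else 1) := by
          rw [hbij.sum_comp (fun y => ∏ n : Fin (m + 1),
            (if y n then Real.exp (2 * α * e n) else 1))]
      _ = Real.exp (2 * α * e0) * ∏ n : Fin (m + 1), (1 + Real.exp (2 * α * e n)) := by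
          congr 1
          rw [← Fintype.piFinset_univ,
            ← Finset.prod_univ_sum (fun _ => (Finset.univ : Finset Bool))
              (fun n b => if b then Real.exp (2 * α * e n) else 1)]
          apply Finset.prod_congr rfl
          intro n _
          simp [Finset.sum_ite_eq, add_comm]
  refine ⟨hmain, fun hcond => ?_⟩
  rw [hmain]
  have hpos : ∀ n : Fin (m + 1), (0:ℝ) < (1 + Real.exp (2 * α * e n)) / 2 := by
    intro n; positivity
  have h1 : Real.exp (2 * α * e0) =
      ∏ n : Fin (m + 1), ((1 + Real.exp (2 * α * e n)) / 2)⁻¹ := by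
    have : 2 * α * e0 = ∑ n : Fin (m + 1),
        -Real.log ((1 + Real.exp (2 * α * e n)) / 2) := by
      rw [mul_assoc, hcond, Finset.sum_neg_distrib]; ring
    rw [this, Real.exp_sum]
    apply Finset.prod_congr rfl
    intro n _
    rw [Real.exp_neg, Real.exp_log (hpos n)]
  rw [h1, ← Finset.prod_mul_distrib]
  have : ∀ n : Fin (m + 1),
      ((1 + Real.exp (2 * α * e n)) / 2)⁻¹ * (1 + Real.exp (2 * α * e n)) = 2 := by
    intro n
    field_simp
  simp only [this, Finset.prod_const, Finset.card_univ, Fintype.card_fin]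
end

section
/- The sum Σ over all binary m-tuples x of exp(2α(e_m x_{π(m)} + Σ_{n=1}^{m-1} e_n ((x_{π(n)} + x_{π(n+1)}) mod 2))) factorizes as Π_{n=1}^m (1 + e^{2α e_n}). -/
def tmap {m : ℕ} (σ : Equiv.Perm (Fin (m + 1))) (x : Fin (m + 1) → Bool) :
    Fin (m + 1) → Bool :=
  Fin.lastCases (x (σ (Fin.last m))) (fun i => xor (x (σ i.castSucc)) (x (σ i.succ)))

lemma tmap_last {m : ℕ} (σ : Equiv.Perm (Fin (m + 1))) (x : Fin (m + 1) → Bool) :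
    tmap σ x (Fin.last m) = x (σ (Fin.last m)) := by
  simp [tmap]

lemma tmap_castSucc {m : ℕ} (σ : Equiv.Perm (Fin (m + 1))) (x : Fin (m + 1) → Bool)
    (i : Fin m) : tmap σ x i.castSucc = xor (x (σ i.castSucc)) (x (σ i.succ)) := by
  simp [tmap]

lemma tmap_injective {m : ℕ} (σ : Equiv.Perm (Fin (m + 1))) :
    Function.Injective (tmap σ) := by
  intro x x' h
  have key : ∀ j : Fin (m + 1), x (σ j) = x' (σ j) := by
    intro j
    induction j using Fin.reverseInduction with
    | last =>
      have := congrFun h (Fin.last m)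
      simpa [tmap_last] using this
    | cast i ih =>
      have := congrFun h i.castSucc
      rw [tmap_castSucc, tmap_castSucc, ih] at this
      rcases hb : x' (σ i.succ) with _ | _ <;> rw [hb] at this <;>
        rcases h1 : x (σ i.castSucc) with _ | _ <;>
        rcases h2 : x' (σ i.castSucc) with _ | _ <;>
        simp_all
  funext j
  have := key (σ⁻¹ j)
  simpa using this

noncomputable def tequiv {m : ℕ} (σ : Equiv.Perm (Fin (m + 1))) :
    (Fin (m + 1) → Bool) ≃ (Fin (m + 1) → Bool) :=
  Equiv.ofBijective (tmap σ) ((Finite.injective_iff_bijective).mp (tmap_injective σ))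

/-- The sum over all binary tuples `x` of
`exp(2α(e_m x_{π(m)} + Σ_n e_n ((x_{π(n)} + x_{π(n+1)}) mod 2)))`
factorizes as `Π_n (1 + e^{2αe_n})`. -/
theorem stmt11 (m : ℕ) (σ : Equiv.Perm (Fin (m + 1))) (α : ℝ)
    (e : Fin (m + 1) → ℝ) :
    (∑ x : Fin (m + 1) → Bool,
        Real.exp (2 * α * (e (Fin.last m) * bitR x (σ (Fin.last m)) +
          ∑ i : Fin m, e i.castSucc *
            (((bitZ x (σ i.castSucc) + bitZ x (σ i.succ)) % 2 : ℤ) : ℝ)))) =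
      ∏ n : Fin (m + 1), (1 + Real.exp (2 * α * e n)) := by
  have step1 : ∀ x : Fin (m + 1) → Bool,
      (e (Fin.last m) * bitR x (σ (Fin.last m)) +
        ∑ i : Fin m, e i.castSucc *
          (((bitZ x (σ i.castSucc) + bitZ x (σ i.succ)) % 2 : ℤ) : ℝ)) =
      ∑ n : Fin (m + 1), e n * bitR (tmap σ x) n := by
    intro x
    rw [Fin.sum_univ_castSucc, add_comm]
    congr 1
    · apply Finset.sum_congr rfl
      intro i _
      rcases h1 : x (σ i.castSucc) <;> rcases h2 : x (σ i.succ) <;>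
        simp [bitZ, bitR, tmap_castSucc, h1, h2]
    · simp [bitR, tmap_last]
  calc (∑ x : Fin (m + 1) → Bool,
        Real.exp (2 * α * (e (Fin.last m) * bitR x (σ (Fin.last m)) +
          ∑ i : Fin m, e i.castSucc *
            (((bitZ x (σ i.castSucc) + bitZ x (σ i.succ)) % 2 : ℤ) : ℝ))))
      = ∑ x : Fin (m + 1) → Bool,
          Real.exp (2 * α * ∑ n : Fin (m + 1), e n * bitR (tmap σ x) n) := by
        apply Finset.sum_congr rfl
        intro x _
        rw [step1 x]
    _ = ∑ y : Fin (m + 1) → Bool,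
          Real.exp (2 * α * ∑ n : Fin (m + 1), e n * bitR y n) := by
        exact Fintype.sum_equiv (tequiv σ) _ _ (fun x => rfl)
    _ = ∑ y : Fin (m + 1) → Bool,
          ∏ n : Fin (m + 1), Real.exp (2 * α * (e n * bitR y n)) := by
        apply Finset.sum_congr rfl
        intro y _
        rw [Finset.mul_sum, Real.exp_sum]
    _ = ∏ n : Fin (m + 1), ∑ b : Bool,
          Real.exp (2 * α * (e n * (if b then (1:ℝ) else 0))) := by
        rw [Finset.prod_univ_sum]
        rw [Fintype.piFinset_univ]
        apply Finset.sum_congr rfl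
        intro y _
        apply Finset.prod_congr rfl
        intro n _
        simp [bitR]
    _ = ∏ n : Fin (m + 1), (1 + Real.exp (2 * α * e n)) := by
        apply Finset.prod_congr rfl
        intro n _
        rw [Fintype.sum_bool]
        simp [add_comm]
end

section
/- If every element of a sequence c ∈ ℂ^N satisfies |c_n| = 1 and c is a complementary sequence (member of some GCP with a companion of equal energy N), then the PAPR of the corresponding OFDM symbol satisfies sup_{|z|=1} |p_c(z)|²/N ≤ 2, and this bound states the peak instantaneous power never exceeds 2N while the mean power is N. -/
/-!
On the unit circle `conj z = z⁻¹`, so `|p_a(z)|² = p_a(z) · conj (p_a(z))` is the Laurent polynomial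
`∑ₖ ρ_a(k) zᵏ` with the aperiodic autocorrelations as coefficients. For a complementary pair all
coefficients with `k ≠ 0` cancel in the sum, leaving `|p_c(z)|² + |p_d(z)|² = ρ_c(0) + ρ_d(0)`,
the total energy `2N`; dropping `|p_d(z)|²` bounds the peak power by `2N`.
-/

open Finset ComplexConjugate

def IsComplementaryPair (a b : ℤ → ℂ) (N : ℕ) : Prop :=
  ∀ k : ℤ, k ≠ 0 → apac a N k + apac b N k = 0

lemma sum_range_eq_sum_Icc_shift {M : Type*} [AddCommMonoid M] {N : ℕ} {f : ℤ → M}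
    (hf : ∀ m : ℤ, m < 0 ∨ (N : ℤ) ≤ m → f m = 0) {n : ℕ} (hn : n < N) :
    ∑ m ∈ range N, f m = ∑ k ∈ Icc (1 - (N : ℤ)) (N - 1), f (n + k) := by
  rw [← sum_image (g := ((n : ℤ) + ·)) (fun _ _ _ _ h => add_left_cancel h), image_add_left_Icc,
    ← sum_image (f := f) (fun _ _ _ _ h => Nat.cast_injective h)]
  refine sum_subset (fun j hj => ?_) (fun j _ hj => hf j ?_)
  · obtain ⟨m, hm, rfl⟩ := mem_image.1 hj
    rw [mem_range] at hm
    rw [mem_Icc]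
    omega
  · by_contra! h
    exact hj (mem_image.2 ⟨j.toNat, by rw [mem_range]; omega, Int.toNat_of_nonneg h.1⟩)

lemma pPoly_mul_conj_eq_sum_apac {a : ℤ → ℂ} {N : ℕ}
    (ha : ∀ n : ℤ, n < 0 ∨ (N : ℤ) ≤ n → a n = 0) {z : ℂ} (hz : ‖z‖ = 1) :
    pPoly a N z * conj (pPoly a N z) =
      ∑ k ∈ Icc (1 - (N : ℤ)) (N - 1), apac a N k * z ^ k := by
  have hz₀ : z ≠ 0 := norm_ne_zero_iff.1 (by rw [hz]; exact one_ne_zero)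
  calc pPoly a N z * conj (pPoly a N z)
      = ∑ n ∈ range N, ∑ m ∈ range N, a m * conj (a n) * z ^ ((m : ℤ) - n) := by
        rw [mul_comm, pPoly, map_sum, sum_mul_sum]
        refine sum_congr rfl fun n _ => sum_congr rfl fun m _ => ?_
        rw [map_mul, map_pow, ← Complex.inv_eq_conj hz, zpow_sub₀ hz₀, zpow_natCast,
          zpow_natCast, inv_pow, div_eq_mul_inv]
        ring
    _ = ∑ n ∈ range N, ∑ k ∈ Icc (1 - (N : ℤ)) (N - 1), a (n + k) * conj (a n) * z ^ k := by
        refine sum_congr rfl fun n hn => ?_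
        rw [sum_range_eq_sum_Icc_shift (f := fun m : ℤ => a m * conj (a n) * z ^ (m - n))
          (fun m hm => by rw [ha m hm, zero_mul, zero_mul]) (mem_range.1 hn)]
        simp only [add_sub_cancel_left]
    _ = ∑ k ∈ Icc (1 - (N : ℤ)) (N - 1), apac a N k * z ^ k := by
        rw [sum_comm]
        simp only [apac, sum_mul]

lemma apac_zero (a : ℤ → ℂ) (N : ℕ) : apac a N 0 = ∑ n ∈ range N, (‖a n‖ ^ 2 : ℝ) := by
  push_cast
  simp only [apac, add_zero, Complex.mul_conj']

lemma IsComplementaryPair.norm_sq_pPoly_add_norm_sq_pPoly {a b : ℤ → ℂ} {N : ℕ}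
    (hab : IsComplementaryPair a b N)
    (ha : ∀ n : ℤ, n < 0 ∨ (N : ℤ) ≤ n → a n = 0)
    (hb : ∀ n : ℤ, n < 0 ∨ (N : ℤ) ≤ n → b n = 0) {z : ℂ} (hz : ‖z‖ = 1) :
    ‖pPoly a N z‖ ^ 2 + ‖pPoly b N z‖ ^ 2 =
      ∑ n ∈ range N, ‖a n‖ ^ 2 + ∑ n ∈ range N, ‖b n‖ ^ 2 := by
  rcases N.eq_zero_or_pos with rfl | hN
  · simp [pPoly]
  apply Complex.ofReal_injective
  calc ((‖pPoly a N z‖ ^ 2 + ‖pPoly b N z‖ ^ 2 : ℝ) : ℂ)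
      = ∑ k ∈ Icc (1 - (N : ℤ)) (N - 1), (apac a N k + apac b N k) * z ^ k := by
        push_cast
        rw [← Complex.mul_conj', ← Complex.mul_conj', pPoly_mul_conj_eq_sum_apac ha hz,
          pPoly_mul_conj_eq_sum_apac hb hz, ← sum_add_distrib]
        simp only [add_mul]
    _ = apac a N 0 + apac b N 0 := by
        rw [sum_eq_single_of_mem 0 (by rw [mem_Icc]; omega)
          (fun k _ hk => by rw [hab k hk, zero_mul]), zpow_zero, mul_one]
    _ = ((∑ n ∈ range N, ‖a n‖ ^ 2 + ∑ n ∈ range N, ‖b n‖ ^ 2 : ℝ) : ℂ) := by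
        rw [apac_zero, apac_zero]
        push_cast
        rfl

theorem stmt17_general (N : ℕ) (c d : ℤ → ℂ)
    (hsc : ∀ n : ℤ, n < 0 ∨ (N : ℤ) ≤ n → c n = 0)
    (hsd : ∀ n : ℤ, n < 0 ∨ (N : ℤ) ≤ n → d n = 0)
    (hcu : ∀ n : ℤ, 0 ≤ n → n < (N : ℤ) → ‖c n‖ = 1)
    (hdE : ∑ n ∈ Finset.range N, ‖d n‖ ^ 2 = N)
    (hGCP : ∀ k : ℤ, k ≠ 0 → apac c N k + apac d N k = 0) :
    ∀ z : ℂ, ‖z‖ = 1 →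
      ‖pPoly c N z‖ ^ 2 / N ≤ 2 := by
  intro z hz
  have hcE : ∑ n ∈ range N, ‖c n‖ ^ 2 = N := by
    rw [sum_congr rfl fun n hn => by
      rw [hcu n n.cast_nonneg (by exact_mod_cast mem_range.1 hn), one_pow]]
    simp
  have henergy := IsComplementaryPair.norm_sq_pPoly_add_norm_sq_pPoly hGCP hsc hsd hz
  rw [hcE, hdE] at henergy
  refine div_le_of_le_mul₀ N.cast_nonneg zero_le_two ?_
  linarith [sq_nonneg ‖pPoly d N z‖]

/-- A unimodular complementary sequence (member of a GCP with a companion of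
energy `N`) has PAPR at most 2: peak power at most `2N` while mean power is `N`. -/
theorem stmt17 (N : ℕ) (hN : 0 < N) (c d : ℤ → ℂ)
    (hsc : ∀ n : ℤ, n < 0 ∨ (N : ℤ) ≤ n → c n = 0)
    (hsd : ∀ n : ℤ, n < 0 ∨ (N : ℤ) ≤ n → d n = 0)
    (hcu : ∀ n : ℤ, 0 ≤ n → n < (N : ℤ) → ‖c n‖ = 1)
    (hdE : ∑ n ∈ Finset.range N, ‖d n‖ ^ 2 = N)
    (hGCP : ∀ k : ℤ, k ≠ 0 → apac c N k + apac d N k = 0) :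
    ∀ z : ℂ, ‖z‖ = 1 →
      ‖pPoly c N z‖ ^ 2 / N ≤ 2 :=
  stmt17_general N c d hsc hsd hcu hdE hGCP
end
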